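/- arXiv:1507.06689 — 3 statements merged into one kernel-verified Lean document; each statement's English description precedes it below -/
import Mathlib

section
/- Let F = (A,R) be an argumentation framework and let S ⊆ A be admissible in F. Then S is a preferred extension of F if and only if for every admissible set E ⊆ A with E ⊄ S (i.e., E is not a subset of S), the union E ∪ S is not conflict-free in F. -/
variable {α : Type*}

/-- S is conflict-free w.r.t. attack relation R: no a,b ∈ S with (a,b) ∈ R. -/
def ConflictFree (R : Set (α × α)) (S : Set α) : Prop :=
  ∀ a ∈ S, ∀ b ∈ S, (a, b) ∉ R

/-- Argument a is defended by S: every attacker b ∈ A of a is attacked by some c ∈ S. -/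
def Defends (A : Set α) (R : Set (α × α)) (S : Set α) (a : α) : Prop :=
  ∀ b ∈ A, (b, a) ∈ R → ∃ c ∈ S, (c, b) ∈ R

/-- S is admissible: S ⊆ A, conflict-free, and each s ∈ S is defended by S. -/
def Admissible (A : Set α) (R : Set (α × α)) (S : Set α) : Prop :=
  S ⊆ A ∧ ConflictFree R S ∧ ∀ s ∈ S, Defends A R S s

/-- S is a preferred extension: admissible and no admissible strict superset. -/
def Preferred (A : Set α) (R : Set (α × α)) (S : Set α) : Prop :=
  Admissible A R S ∧ ¬ ∃ T, Admissible A R T ∧ S ⊂ T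

/-- The range S⁺ of S w.r.t. R: S together with everything attacked by S. -/
def rangeOf (R : Set (α × α)) (S : Set α) : Set α :=
  S ∪ {x | ∃ y ∈ S, (y, x) ∈ R}

/-- S is a stable extension: conflict-free subset of A with S⁺ = A. -/
def Stable (A : Set α) (R : Set (α × α)) (S : Set α) : Prop :=
  S ⊆ A ∧ ConflictFree R S ∧ rangeOf R S = A

/-- S is a stage extension: conflict-free and no conflict-free T ⊆ A with T⁺ ⊋ S⁺. -/
def Stage (A : Set α) (R : Set (α × α)) (S : Set α) : Prop :=
  S ⊆ A ∧ ConflictFree R S ∧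
    ¬ ∃ T, T ⊆ A ∧ ConflictFree R T ∧ rangeOf R S ⊂ rangeOf R T

/-- S is a semi-stable extension: admissible and no admissible T with T⁺ ⊋ S⁺. -/
def SemiStable (A : Set α) (R : Set (α × α)) (S : Set α) : Prop :=
  Admissible A R S ∧ ¬ ∃ T, Admissible A R T ∧ rangeOf R S ⊂ rangeOf R T

theorem ConflictFree.mono {R : Set (α × α)} {S T : Set α} (hT : ConflictFree R T)
    (hST : S ⊆ T) : ConflictFree R S :=
  fun a ha b hb => hT a (hST ha) b (hST hb)

theorem Defends.mono {A : Set α} {R : Set (α × α)} {S T : Set α} {a : α}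
    (h : Defends A R S a) (hST : S ⊆ T) : Defends A R T a := fun b hb hba =>
  let ⟨c, hc, hcb⟩ := h b hb hba
  ⟨c, hST hc, hcb⟩

theorem Admissible.union {A : Set α} {R : Set (α × α)} {E S : Set α}
    (hE : Admissible A R E) (hS : Admissible A R S) (hES : ConflictFree R (E ∪ S)) :
    Admissible A R (E ∪ S) := by
  refine ⟨Set.union_subset hE.1 hS.1, hES, ?_⟩
  rintro s (hs | hs)
  · exact (hE.2.2 s hs).mono Set.subset_union_left
  · exact (hS.2.2 s hs).mono Set.subset_union_right

theorem stmt_0_general (A : Set α) (R : Set (α × α))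
    (S : Set α) (hS : Admissible A R S) :
    Preferred A R S ↔
      ∀ E : Set α, E ⊆ A → Admissible A R E → ¬ E ⊆ S →
        ¬ ConflictFree R (E ∪ S) := by
  constructor
  · rintro ⟨-, hmax⟩ E - hE hES hCF
    exact hmax ⟨E ∪ S, hE.union hS hCF, Set.ssubset_union_right_iff.mpr hES⟩
  · refine fun h => ⟨hS, ?_⟩
    rintro ⟨T, hT, hST⟩
    exact h T hT.1 hT hST.not_subset (hT.2.1.mono (Set.union_subset subset_rfl hST.subset))

theorem stmt_0 (A : Set α) (R : Set (α × α)) (hR : R ⊆ A ×ˢ A)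
    (S : Set α) (hS : Admissible A R S) :
    Preferred A R S ↔
      ∀ E : Set α, E ⊆ A → Admissible A R E → ¬ E ⊆ S →
        ¬ ConflictFree R (E ∪ S) :=
  stmt_0_general A R S hS
end

section
/- Let F = (A,R) be an argumentation framework. If F has at least one stable extension, then the set of stable extensions of F equals the set of semi-stable extensions of F. -/
variable {α : Type*}

/-! Every range lies inside `A`, and a stable extension is an admissible set whose range is all of
`A`. So a stable extension has the largest possible range among admissible sets, and once one
exists, a range-maximal admissible set cannot have a smaller range than it. -/

section

variable {A : Set α} {R : Set (α × α)} {S : Set α}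

lemma rangeOf_subset (hR : R ⊆ A ×ˢ A) (hS : S ⊆ A) : rangeOf R S ⊆ A := by
  rintro x (hx | ⟨y, -, hyx⟩)
  · exact hS hx
  · exact (hR hyx).2

lemma Stable.admissible (hS : Stable A R S) : Admissible A R S := by
  obtain ⟨hSA, hcf, hrange⟩ := hS
  refine ⟨hSA, hcf, fun s hs b hb hbs => ?_⟩
  rcases (hrange ▸ hb : b ∈ rangeOf R S) with hbS | hSb
  · exact absurd hbs (hcf b hbS s hs)
  · exact hSb

lemma Stable.semiStable (hR : R ⊆ A ×ˢ A) (hS : Stable A R S) : SemiStable A R S :=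
  ⟨hS.admissible, fun ⟨_, hT, hlt⟩ =>
    hlt.not_subset ((rangeOf_subset hR hT.1).trans_eq hS.2.2.symm)⟩

lemma SemiStable.stable (hR : R ⊆ A ×ˢ A) (hS : SemiStable A R S) {S₀ : Set α}
    (hS₀ : Stable A R S₀) : Stable A R S := by
  obtain ⟨hadm, hmax⟩ := hS
  refine ⟨hadm.1, hadm.2.1, ?_⟩
  by_contra hne
  exact hmax ⟨S₀, hS₀.admissible, hS₀.2.2 ▸ (rangeOf_subset hR hadm.1).ssubset_of_ne hne⟩

end

theorem stmt_14 (A : Set α) (R : Set (α × α)) (hR : R ⊆ A ×ˢ A)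
    (h : ∃ S : Set α, Stable A R S) :
    {S : Set α | Stable A R S} = {S : Set α | SemiStable A R S} := by
  obtain ⟨S₀, hS₀⟩ := h
  ext S
  exact ⟨Stable.semiStable hR, fun hS => hS.stable hR hS₀⟩
end

section
/- Let F = (A,R) be an argumentation framework with A finite. Then F possesses at least one semi-stable extension. -/
variable {α : Type*}

/-! Over a finite set of arguments there are only finitely many admissible sets, the empty set
among them, so one of them has a ⊆-maximal range. -/

section

variable {A : Set α} {R : Set (α × α)}

theorem admissible_empty : Admissible A R ∅ :=
  ⟨Set.empty_subset A, by simp [ConflictFree], by simp⟩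

theorem Set.Finite.setOf_admissible (hA : A.Finite) : {S | Admissible A R S}.Finite :=
  hA.finite_subsets.subset fun _ hS => hS.1

theorem semiStable_of_maximalFor {S : Set α}
    (hS : MaximalFor (Admissible A R) (rangeOf R) S) : SemiStable A R S :=
  ⟨hS.prop, fun ⟨_, hT, hST⟩ => hST.not_subset (hS.2 hT hST.subset)⟩

end

theorem stmt_18_general (A : Set α) (R : Set (α × α))
    (hA : A.Finite) :
    ∃ S : Set α, SemiStable A R S :=
  let ⟨S, hS⟩ := hA.setOf_admissible.exists_maximalFor (rangeOf R) _ ⟨∅, admissible_empty⟩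
  ⟨S, semiStable_of_maximalFor hS⟩

theorem stmt_18 (A : Set α) (R : Set (α × α)) (hR : R ⊆ A ×ˢ A)
    (hA : A.Finite) :
    ∃ S : Set α, SemiStable A R S :=
  stmt_18_general A R hA
end
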